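/- For every real a ≥ 1 there exists a constant C > 0 such that for every p_F ≥ 1, every k ∈ ℤ³ with 1 ≤ |k| ≤ a, and every q ∈ ℤ³, one has N(q, k) ≤ C·p_F. -/

import Mathlib

/-!
Since `|r + k| ≤ |r| + |k|`, every counted `r` lies on the plane `r·k = q·k` and in the shell
`p_F - a < |r| ≤ p_F`, so `p_F² - w < |r|² ≤ p_F²` with `w = 2 a p_F`. Choose `j` with
`k_j ≠ 0`: projecting the plane onto the two other coordinates `(x, y)` is injective, and
completing squares gives `|r|² = B (x - x₀)² + A (y - y₀(x))² + e` with `A, B ≥ 1`. Setting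
`V = p_F² - e` and `u(x) = V - B (x - x₀)²`, the column over `x` contains at most
`2 (√u - √(u - w)) + 2` points. Since `√u - √(u - w) ≤ min (√w, w / √u)` and `u` grows at least
linearly with the distance from the outermost column, `∑ n ≤ N, n^(-1/2) ≤ 2 √N` bounds the sum
of these widths by `O(w)`; with at most `2 p_F + 1` columns the count is `O(a p_F)`.
-/

open Real

/-- The Euclidean norm of a lattice point in `ℤ^d`. -/
noncomputable def zNorm {d : ℕ} (p : Fin d → ℤ) : ℝ := Real.sqrt (∑ i, ((p i : ℝ)) ^ 2)

/-- The counting function `N(q, k)`: the number of `r ∈ ℤ³` with `|r| ≤ p_F`,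
`|r + k| > p_F` and `r·k = q·k`. -/
noncomputable def latticeCount (pF : ℝ) (q k : Fin 3 → ℤ) : ℕ :=
  Set.ncard {r : Fin 3 → ℤ |
    zNorm r ≤ pF ∧ pF < zNorm (r + k) ∧ (∑ i, r i * k i) = ∑ i, q i * k i}

open Finset

/-- The length of `{t ≥ 0 | u - w < t² ≤ u}`; for `u < w` the junk value `√(u - w) = 0` makes
this `√u`, which is still that length. -/
noncomputable def windowWidth (w u : ℝ) : ℝ := √u - √(u - w)

lemma windowWidth_le_sqrt {w : ℝ} (hw : 0 ≤ w) (u : ℝ) : windowWidth w u ≤ √w := by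
  unfold windowWidth
  rcases le_total w u with hwu | huw
  · have h : √u ≤ √(u - w) + √w := by
      rw [Real.sqrt_le_left (by positivity)]
      nlinarith [Real.sq_sqrt (sub_nonneg.2 hwu), Real.sq_sqrt hw, Real.sqrt_nonneg (u - w),
        Real.sqrt_nonneg w]
    linarith
  · linarith [Real.sqrt_le_sqrt huw, Real.sqrt_nonneg (u - w)]

lemma windowWidth_le_div {w u : ℝ} (hw : 0 ≤ w) (hu : 0 < u) : windowWidth w u ≤ w / √u := by
  unfold windowWidth
  rw [le_div_iff₀ (Real.sqrt_pos.2 hu)]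
  rcases le_total w u with hwu | huw
  · have hle : √(u - w) ≤ √u := Real.sqrt_le_sqrt (by linarith)
    nlinarith [Real.sq_sqrt (sub_nonneg.2 hwu), Real.sq_sqrt hu.le, Real.sqrt_nonneg (u - w)]
  · rw [Real.sqrt_eq_zero_of_nonpos (x := u - w) (by linarith), sub_zero,
      Real.mul_self_sqrt hu.le]
    exact huw

lemma windowWidth_le_of_sq_le {B D s V w : ℝ} (hB : 1 ≤ B) (hw : 0 ≤ w) (hs : 0 ≤ s)
    (hsD : s + 1 ≤ D) (hV : B * D ^ 2 ≤ V) :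
    windowWidth w (V - B * s ^ 2) ≤ w / √D * (1 / √(D - s)) := by
  have hu : (D - s) * D ≤ V - B * s ^ 2 :=
    calc (D - s) * D ≤ (D - s) * (D + s) := by nlinarith
      _ ≤ B * ((D - s) * (D + s)) := le_mul_of_one_le_left (by nlinarith) hB
      _ ≤ V - B * s ^ 2 := by linarith
  have hpos : 0 < (D - s) * D := by nlinarith
  calc _ ≤ w / √(V - B * s ^ 2) := windowWidth_le_div hw (by linarith)
    _ ≤ w / √((D - s) * D) :=
        div_le_div_of_nonneg_left hw (Real.sqrt_pos.2 hpos) (Real.sqrt_le_sqrt hu)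
    _ = w / √D * (1 / √(D - s)) := by
        rw [Real.sqrt_mul (by linarith), mul_comm]
        field_simp

lemma sum_Icc_one_div_sqrt_le (N : ℕ) : ∑ n ∈ Icc 1 N, 1 / √(n : ℝ) ≤ 2 * √(N : ℝ) := by
  induction N with
  | zero => simp
  | succ N ih =>
    rw [sum_Icc_succ_top (by omega)]
    push_cast
    have hpos : 0 < √((N : ℝ) + 1) := Real.sqrt_pos.2 (by positivity)
    have step : 1 / √((N : ℝ) + 1) ≤ 2 * (√((N : ℝ) + 1) - √(N : ℝ)) := by
      rw [div_le_iff₀ hpos]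
      nlinarith [Real.sq_sqrt (Nat.cast_nonneg (α := ℝ) N),
        Real.sq_sqrt (by positivity : (0 : ℝ) ≤ N + 1), sq_nonneg (√((N : ℝ) + 1) - √(N : ℝ))]
    linarith

lemma sum_one_div_sqrt_sub_le {S : Finset ℤ} {m : ℤ} {D : ℝ} (hD : 0 ≤ D)
    (hS : ∀ x ∈ S, x < m ∧ ((m - x : ℤ) : ℝ) ≤ D) :
    ∑ x ∈ S, 1 / √((m - x : ℤ) : ℝ) ≤ 2 * √D := by
  set n : ℤ → ℕ := fun x => (m - x).toNat
  have hn : ∀ x ∈ S, ((n x : ℕ) : ℝ) = ((m - x : ℤ) : ℝ) := fun x hx => by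
    rw [← Int.cast_natCast, Int.toNat_of_nonneg (by linarith [(hS x hx).1])]
  have hinj : Set.InjOn n S := fun x hx y hy hxy => by
    have := congrArg (Nat.cast : ℕ → ℝ) hxy
    rw [hn x hx, hn y hy] at this
    exact_mod_cast (by push_cast at this; linarith : (x : ℝ) = y)
  have himage : S.image n ⊆ Icc 1 ⌊D⌋₊ := by
    intro k hk
    obtain ⟨x, hx, rfl⟩ := mem_image.1 hk
    have hlt := (hS x hx).1
    exact mem_Icc.2 ⟨show 1 ≤ (m - x).toNat by omega,
      Nat.le_floor ((hn x hx).trans_le (hS x hx).2)⟩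
  calc ∑ x ∈ S, 1 / √((m - x : ℤ) : ℝ) = ∑ k ∈ S.image n, 1 / √(k : ℝ) := by
        rw [sum_image hinj]
        exact sum_congr rfl fun x hx => by rw [hn x hx]
    _ ≤ ∑ k ∈ Icc 1 ⌊D⌋₊, 1 / √(k : ℝ) :=
        sum_le_sum_of_subset_of_nonneg himage fun _ _ _ => by positivity
    _ ≤ 2 * √D := (sum_Icc_one_div_sqrt_le _).trans (by gcongr; exact Nat.floor_le hD)

lemma sum_windowWidth_le_of_le {S : Finset ℤ} {B x₀ V w : ℝ} (hB : 1 ≤ B) (hw : 0 ≤ w)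
    (hS : ∀ x ∈ S, x₀ ≤ x ∧ B * (x - x₀) ^ 2 ≤ V) :
    ∑ x ∈ S, windowWidth w (V - B * (x - x₀) ^ 2) ≤ √w + 2 * w := by
  rcases S.eq_empty_or_nonempty with rfl | hne
  · simp only [sum_empty]; positivity
  set m := S.max' hne
  have hm : m ∈ S := max'_mem S hne
  set D : ℝ := m - x₀
  have hD : 0 ≤ D := sub_nonneg.2 (hS m hm).1
  have hdist : ∀ x ∈ S.erase m, x < m ∧ ((m - x : ℤ) : ℝ) ≤ D := fun x hx => by
    obtain ⟨hxm, hxS⟩ := mem_erase.1 hx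
    refine ⟨lt_of_le_of_ne (le_max' S x hxS) hxm, ?_⟩
    push_cast
    linarith [(hS x hxS).1]
  have hterm : ∀ x ∈ S.erase m,
      windowWidth w (V - B * (x - x₀) ^ 2) ≤ w / √D * (1 / √((m - x : ℤ) : ℝ)) := by
    intro x hx
    have hlt : (x : ℝ) + 1 ≤ m := by exact_mod_cast (hdist x hx).1
    have h := windowWidth_le_of_sq_le hB hw (sub_nonneg.2 (hS x (mem_of_mem_erase hx)).1)
      (by linarith) (hS m hm).2
    rwa [show D - (x - x₀) = ((m - x : ℤ) : ℝ) by push_cast; ring] at h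
  have hrest : ∑ x ∈ S.erase m, windowWidth w (V - B * (x - x₀) ^ 2) ≤ 2 * w :=
    calc _ ≤ ∑ x ∈ S.erase m, w / √D * (1 / √((m - x : ℤ) : ℝ)) := sum_le_sum hterm
      _ = w / √D * ∑ x ∈ S.erase m, 1 / √((m - x : ℤ) : ℝ) := by rw [mul_sum]
      _ ≤ w / √D * (2 * √D) := by gcongr; exact sum_one_div_sqrt_sub_le hD hdist
      _ ≤ 2 * w := by
          rcases hD.eq_or_lt with hD0 | hD0
          · rw [← hD0, Real.sqrt_zero, div_zero, zero_mul]; positivity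
          · have := (Real.sqrt_pos.2 hD0).ne'
            exact le_of_eq (by field_simp)
  rw [← add_sum_erase S _ hm]
  linarith [windowWidth_le_sqrt hw (V - B * (m - x₀) ^ 2)]

lemma sum_windowWidth_le {S : Finset ℤ} {B x₀ V w : ℝ} (hB : 1 ≤ B) (hw : 0 ≤ w)
    (hS : ∀ x ∈ S, B * (x - x₀) ^ 2 ≤ V) :
    ∑ x ∈ S, windowWidth w (V - B * (x - x₀) ^ 2) ≤ 2 * √w + 4 * w := by
  rw [← sum_filter_add_sum_filter_not S (fun x : ℤ => x₀ ≤ x)]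
  have hright := sum_windowWidth_le_of_le (S := S.filter (fun x : ℤ => x₀ ≤ x)) hB hw
    fun x hx => ⟨(mem_filter.1 hx).2, hS x (mem_filter.1 hx).1⟩
  have hleft := sum_windowWidth_le_of_le (x₀ := -x₀) (V := V)
    (S := (S.filter (fun x : ℤ => ¬ x₀ ≤ x)).map (Equiv.neg ℤ).toEmbedding) hB hw <| by
      simp only [mem_map, mem_filter, Equiv.toEmbedding_apply, Equiv.neg_apply]
      rintro _ ⟨x, ⟨hx, hlt⟩, rfl⟩
      push_cast
      refine ⟨by linarith, ?_⟩
      convert hS x hx using 2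
      ring
  rw [sum_map] at hleft
  have hsym : ∀ x : ℤ, (((Equiv.neg ℤ).toEmbedding x : ℤ) - -x₀ : ℝ) ^ 2 = (x - x₀) ^ 2 := by
    intro x; simp only [Equiv.toEmbedding_apply, Equiv.neg_apply, Int.cast_neg]; ring
  simp only [hsym] at hleft
  linarith

lemma card_le_of_forall_mem_Icc {T : Finset ℤ} {a b : ℝ} (hab : a ≤ b)
    (hT : ∀ y ∈ T, a ≤ y ∧ (y : ℝ) ≤ b) : (T.card : ℝ) ≤ b - a + 1 := by
  have hsub : T ⊆ Icc ⌈a⌉ ⌊b⌋ := fun y hy =>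
    mem_Icc.2 ⟨Int.ceil_le.2 (hT y hy).1, Int.le_floor.2 (hT y hy).2⟩
  have hnonneg : 0 ≤ ⌊b⌋ + 1 - ⌈a⌉ := by
    have : (⌈a⌉ : ℝ) < ⌊b⌋ + 2 := by linarith [Int.ceil_lt_add_one a, Int.lt_floor_add_one b]
    have : ⌈a⌉ < ⌊b⌋ + 2 := by exact_mod_cast this
    omega
  have hcard : ((Icc ⌈a⌉ ⌊b⌋).card : ℝ) ≤ b - a + 1 := by
    rw [Int.card_Icc, ← Int.cast_natCast, Int.toNat_of_nonneg hnonneg]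
    push_cast
    linarith [Int.floor_le b, Int.le_ceil a]
  exact le_trans (by exact_mod_cast card_le_card hsub) hcard

lemma card_le_of_abs_sub_mem_Icc {T : Finset ℤ} {y₀ l h : ℝ} (hlh : l ≤ h)
    (hT : ∀ y ∈ T, l ≤ |y - y₀| ∧ |y - y₀| ≤ h) : (T.card : ℝ) ≤ 2 * (h - l) + 2 := by
  rw [← card_filter_add_card_filter_not (fun y : ℤ => y₀ ≤ y)]
  have hright : ((T.filter (fun y : ℤ => y₀ ≤ y)).card : ℝ) ≤ (y₀ + h) - (y₀ + l) + 1 := by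
    refine card_le_of_forall_mem_Icc (by linarith) fun y hy => ?_
    obtain ⟨hyT, hy₀⟩ := mem_filter.1 hy
    have := hT y hyT
    rw [abs_of_nonneg (sub_nonneg.2 hy₀)] at this
    constructor <;> linarith
  have hleft : ((T.filter (fun y : ℤ => ¬ y₀ ≤ y)).card : ℝ) ≤ (y₀ - l) - (y₀ - h) + 1 := by
    refine card_le_of_forall_mem_Icc (by linarith) fun y hy => ?_
    obtain ⟨hyT, hy₀⟩ := mem_filter.1 hy
    have := hT y hyT
    rw [abs_of_neg (sub_neg.2 (not_le.1 hy₀))] at this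
    constructor <;> linarith
  push_cast
  linarith

lemma card_le_windowWidth {T : Finset ℤ} {A y₀ U w : ℝ} (hA : 1 ≤ A) (hw : 0 ≤ w)
    (hT : ∀ y ∈ T, U - w < A * (y - y₀) ^ 2 ∧ A * (y - y₀) ^ 2 ≤ U) :
    (T.card : ℝ) ≤ 2 * windowWidth w U + 2 := by
  have hA₀ : 0 < A := by linarith
  have hwidth : √(U / A) - √((U - w) / A) ≤ windowWidth w U := by
    rw [Real.sqrt_div' _ hA₀.le, Real.sqrt_div' _ hA₀.le, ← sub_div]
    exact div_le_self (by linarith [Real.sqrt_le_sqrt (by linarith : U - w ≤ U)])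
      (Real.one_le_sqrt.2 hA)
  have hcard := card_le_of_abs_sub_mem_Icc (T := T) (y₀ := y₀)
    (Real.sqrt_le_sqrt (div_le_div_of_nonneg_right (by linarith : U - w ≤ U) hA₀.le))
    fun y hy => by
      obtain ⟨hlo, hhi⟩ := hT y hy
      refine ⟨?_, Real.abs_le_sqrt ((le_div_iff₀' hA₀).2 hhi)⟩
      rw [← Real.sqrt_sq_eq_abs]
      exact Real.sqrt_le_sqrt ((div_le_iff₀' hA₀).2 hlo.le)
  linarith

lemma card_le_of_mem_annulus {G : Finset (ℤ × ℤ)} {A B x₀ V w : ℝ} {y₀ : ℤ → ℝ}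
    (hA : 1 ≤ A) (hB : 1 ≤ B) (hw : 0 ≤ w)
    (hG : ∀ p ∈ G, V - w < B * (p.1 - x₀) ^ 2 + A * (p.2 - y₀ p.1) ^ 2 ∧
      B * (p.1 - x₀) ^ 2 + A * (p.2 - y₀ p.1) ^ 2 ≤ V) :
    (G.card : ℝ) ≤ 4 * √w + 8 * w + 2 * (G.image Prod.fst).card := by
  have hfiber : ∀ x ∈ G.image Prod.fst,
      (({p ∈ G | p.1 = x}).card : ℝ) ≤ 2 * windowWidth w (V - B * (x - x₀) ^ 2) + 2 := by
    intro x _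
    rw [← card_image_of_injOn (f := Prod.snd) fun p hp q hq hpq =>
      Prod.ext ((mem_filter.1 hp).2.trans (mem_filter.1 hq).2.symm) hpq]
    refine card_le_windowWidth (y₀ := y₀ x) hA hw fun y hy => ?_
    obtain ⟨p, hp, rfl⟩ := mem_image.1 hy
    obtain ⟨hpG, rfl⟩ := mem_filter.1 hp
    constructor <;> linarith [hG p hpG]
  have hsum := sum_windowWidth_le (S := G.image Prod.fst) (x₀ := x₀) (V := V) hB hw
    fun x hx => by
      obtain ⟨p, hp, rfl⟩ := mem_image.1 hx
      nlinarith [hG p hp, sq_nonneg ((p.2 : ℝ) - y₀ p.1)]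
  rw [card_eq_sum_card_image Prod.fst G]
  push_cast
  calc _ ≤ ∑ x ∈ G.image Prod.fst, (2 * windowWidth w (V - B * (x - x₀) ^ 2) + 2) :=
        sum_le_sum hfiber
    _ ≤ _ := by
      rw [sum_add_distrib, ← mul_sum, sum_const, nsmul_eq_mul]
      linarith

lemma Fin.sum_univ_three_rotate {M : Type*} [AddCommMonoid M] (j : Fin 3) (f : Fin 3 → M) :
    ∑ i, f i = f j + f (j + 1) + f (j + 2) := by
  rw [← Equiv.sum_comp (Equiv.addLeft j) f, Fin.sum_univ_three]
  simp

lemma Fin.eq_or_eq_add_one_or_eq_add_two (i j : Fin 3) : i = j ∨ i = j + 1 ∨ i = j + 2 := by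
  revert i j; decide

lemma zNorm_sq {d : ℕ} (p : Fin d → ℤ) : zNorm p ^ 2 = ∑ i, (p i : ℝ) ^ 2 :=
  Real.sq_sqrt (by positivity)

lemma zNorm_eq_norm {d : ℕ} (p : Fin d → ℤ) :
    zNorm p = ‖(WithLp.toLp 2 (fun i => (p i : ℝ)) : EuclideanSpace ℝ (Fin d))‖ := by
  simp [zNorm, EuclideanSpace.norm_eq]

lemma zNorm_add_le {d : ℕ} (p q : Fin d → ℤ) : zNorm (p + q) ≤ zNorm p + zNorm q := by
  simp only [zNorm_eq_norm]
  refine (le_of_eq ?_).trans (norm_add_le _ _)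
  congr 1
  ext i
  simp

lemma abs_le_zNorm {d : ℕ} (p : Fin d → ℤ) (i : Fin d) : |(p i : ℝ)| ≤ zNorm p :=
  Real.abs_le_sqrt (single_le_sum (f := fun i => (p i : ℝ) ^ 2) (fun _ _ => by positivity)
    (mem_univ i))

lemma finite_setOf_zNorm_le {d : ℕ} (R : ℝ) : {p : Fin d → ℤ | zNorm p ≤ R}.Finite := by
  refine (Set.finite_Icc (fun _ => -⌈R⌉) fun _ => ⌈R⌉).subset fun p hp => ?_
  have hR : ∀ i, |p i| ≤ ⌈R⌉ := fun i => by
    exact_mod_cast ((abs_le_zNorm p i).trans hp).trans (Int.le_ceil R)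
  exact ⟨fun i => (abs_le.1 (hR i)).1, fun i => (abs_le.1 (hR i)).2⟩

lemma sq_sub_two_mul_lt_zNorm_sq {d : ℕ} {r k : Fin d → ℤ} {p a : ℝ} (hp : 0 < p)
    (hka : zNorm k ≤ a) (hr : p < zNorm (r + k)) : p ^ 2 - 2 * a * p < zNorm r ^ 2 := by
  have hlt : p - a < zNorm r := by linarith [zNorm_add_le r k]
  have hnonneg : 0 ≤ zNorm r := Real.sqrt_nonneg _
  rcases le_total a p with hap | hpa
  · have := mul_self_lt_mul_self (sub_nonneg.2 hap) hlt
    nlinarith [sq_nonneg a]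
  · nlinarith

/-- Completing the square on the plane `k₀ z + k₁ x + k₂ y = c`, first in `y`, then in `x`. -/
lemma sq_add_sq_add_sq_eq_of_linear_eq {k₀ k₁ k₂ x y z c : ℝ} (hk₀ : k₀ ≠ 0)
    (h : k₀ * z + k₁ * x + k₂ * y = c) :
    x ^ 2 + y ^ 2 + z ^ 2 =
      (k₀ ^ 2 + k₁ ^ 2 + k₂ ^ 2) / (k₀ ^ 2 + k₂ ^ 2) *
          (x - k₁ * c / (k₀ ^ 2 + k₁ ^ 2 + k₂ ^ 2)) ^ 2 +
        (k₀ ^ 2 + k₂ ^ 2) / k₀ ^ 2 * (y - k₂ * (c - k₁ * x) / (k₀ ^ 2 + k₂ ^ 2)) ^ 2 +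
        c ^ 2 / (k₀ ^ 2 + k₁ ^ 2 + k₂ ^ 2) := by
  have hK : k₀ ^ 2 + k₂ ^ 2 ≠ 0 := by positivity
  have hN : k₀ ^ 2 + k₁ ^ 2 + k₂ ^ 2 ≠ 0 := by positivity
  obtain rfl : z = (c - k₁ * x - k₂ * y) / k₀ := by field_simp; linarith
  field_simp
  ring

lemma injOn_of_sum_mul_eq {k : Fin 3 → ℤ} {j : Fin 3} (hj : k j ≠ 0) (c : ℤ) :
    Set.InjOn (fun r : Fin 3 → ℤ => (r (j + 1), r (j + 2))) {r | ∑ i, r i * k i = c} := by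
  intro r hr r' hr' hrr'
  obtain ⟨h₁, h₂⟩ := Prod.mk.inj hrr'
  simp only [Set.mem_ofPred_eq, Fin.sum_univ_three_rotate j] at hr hr'
  have h₀ : r j = r' j := mul_left_cancel₀ hj <| by
    linear_combination hr - hr' - k (j + 1) * h₁ - k (j + 2) * h₂
  funext i
  rcases Fin.eq_or_eq_add_one_or_eq_add_two i j with rfl | rfl | rfl <;> assumption

lemma ncard_plane_shell_le {k : Fin 3 → ℤ} {j : Fin 3} (hj : k j ≠ 0) (c : ℤ) {p w : ℝ}
    (hp : 0 ≤ p) (hw : 0 ≤ w) :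
    ({r : Fin 3 → ℤ | p ^ 2 - w < zNorm r ^ 2 ∧ zNorm r ≤ p ∧ ∑ i, r i * k i = c}.ncard : ℝ)
      ≤ 4 * √w + 8 * w + 2 * (2 * p + 1) := by
  set S := {r : Fin 3 → ℤ | p ^ 2 - w < zNorm r ^ 2 ∧ zNorm r ≤ p ∧ ∑ i, r i * k i = c}
  have hSfin : S.Finite := (finite_setOf_zNorm_le p).subset fun r hr => hr.2.1
  set φ : (Fin 3 → ℤ) → ℤ × ℤ := fun r => (r (j + 1), r (j + 2))
  have hinj : Set.InjOn φ S := (injOn_of_sum_mul_eq hj c).mono fun r hr => hr.2.2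
  set G := (hSfin.image φ).toFinset
  have hG : ∀ x ∈ G, ∃ r ∈ S, φ r = x := by simp [G]
  have hcard : S.ncard = G.card := by
    rw [← hinj.ncard_image, Set.ncard_eq_toFinset_card _ (hSfin.image φ)]
  set k₀ : ℝ := (k j : ℝ)
  set k₁ : ℝ := (k (j + 1) : ℝ)
  set k₂ : ℝ := (k (j + 2) : ℝ)
  have hk₀ : k₀ ≠ 0 := Int.cast_ne_zero.2 hj
  have hA : 1 ≤ (k₀ ^ 2 + k₂ ^ 2) / k₀ ^ 2 := (one_le_div (by positivity)).2 (by nlinarith)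
  have hB : 1 ≤ (k₀ ^ 2 + k₁ ^ 2 + k₂ ^ 2) / (k₀ ^ 2 + k₂ ^ 2) :=
    (one_le_div (by positivity)).2 (by nlinarith)
  have hwindow := card_le_of_mem_annulus (G := G) hA hB hw
    (x₀ := k₁ * c / (k₀ ^ 2 + k₁ ^ 2 + k₂ ^ 2))
    (y₀ := fun x => k₂ * (c - k₁ * x) / (k₀ ^ 2 + k₂ ^ 2))
    (V := p ^ 2 - c ^ 2 / (k₀ ^ 2 + k₁ ^ 2 + k₂ ^ 2)) fun x hx => by
      obtain ⟨r, hr, rfl⟩ := hG x hx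
      have hid := sq_add_sq_add_sq_eq_of_linear_eq hk₀ (k₁ := k₁) (k₂ := k₂) (x := r (j + 1))
        (y := r (j + 2)) (z := r j) (c := c) (by
          have hplane := congrArg (Int.cast : ℤ → ℝ) hr.2.2
          push_cast [Fin.sum_univ_three_rotate j] at hplane
          simp only [k₀, k₁, k₂]
          linear_combination hplane)
      have hsq : zNorm r ^ 2 = (r (j + 1) : ℝ) ^ 2 + (r (j + 2) : ℝ) ^ 2 + (r j : ℝ) ^ 2 := by
        rw [zNorm_sq, Fin.sum_univ_three_rotate j]; ring
      have hle : zNorm r ^ 2 ≤ p ^ 2 := pow_le_pow_left₀ (Real.sqrt_nonneg _) hr.2.1 2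
      have hlt := hr.1
      constructor <;> linarith
  have hcols : ((G.image Prod.fst).card : ℝ) ≤ p - -p + 1 := by
    refine card_le_of_forall_mem_Icc (by linarith) fun x hx => ?_
    obtain ⟨_, hxG, rfl⟩ := mem_image.1 hx
    obtain ⟨r, hr, rfl⟩ := hG _ hxG
    exact abs_le.1 ((abs_le_zNorm r (j + 1)).trans hr.2.1)
  rw [hcard]
  linarith

/-- For every `a ≥ 1` there is a constant `C > 0` such that for every `p_F ≥ 1`, every
`k ∈ ℤ³` with `1 ≤ |k| ≤ a`, and every `q ∈ ℤ³`, one has `N(q,k) ≤ C·p_F`. -/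
theorem stmt6 (a : ℝ) (ha : 1 ≤ a) :
    ∃ C : ℝ, 0 < C ∧ ∀ pF : ℝ, 1 ≤ pF → ∀ k : Fin 3 → ℤ, 1 ≤ zNorm k → zNorm k ≤ a →
      ∀ q : Fin 3 → ℤ, (latticeCount pF q k : ℝ) ≤ C * pF := by
  refine ⟨30 * a, by positivity, fun pF hpF k hk hka q => ?_⟩
  obtain ⟨j, hj⟩ : ∃ j, k j ≠ 0 := by
    by_contra! h
    have : zNorm k = 0 := by simp [zNorm, h]
    linarith
  have hshell : (latticeCount pF q k : ℝ) ≤ ({r : Fin 3 → ℤ | pF ^ 2 - 2 * a * pF < zNorm r ^ 2 ∧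
      zNorm r ≤ pF ∧ ∑ i, r i * k i = ∑ i, q i * k i}.ncard : ℝ) :=
    Nat.cast_le.2 <| Set.ncard_le_ncard (fun r ⟨hr, hrk, hplane⟩ =>
      ⟨sq_sub_two_mul_lt_zNorm_sq (by linarith) hka hrk, hr, hplane⟩)
      ((finite_setOf_zNorm_le pF).subset fun r hr => hr.2.1)
  have hcount := ncard_plane_shell_le hj (∑ i, q i * k i) (by linarith : 0 ≤ pF)
    (by positivity : 0 ≤ 2 * a * pF)
  have hsqrt : √(2 * a * pF) ≤ 2 * a * pF := Real.sqrt_le_self_iff.2 (Or.inr (by nlinarith))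
  nlinarith
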